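/- Let G : [m1, m2] → ℝ be nonnegative, nondecreasing, convex, and integrable with 0 < m1 < m2, and λ > 0. Then G(√(m1·m2)) ≤ (Γ(λ+1)/(2(ln m2 - ln m1)^λ))·[H_{m1+}^λ G(m2) + H_{m2-}^λ G(m1)] ≤ G(m2), where H_{m1+}^λ G(x) = (1/Γ(λ)) ∫_{m1}^x (ln(x/γ))^{λ-1} G(γ)/γ dγ and H_{m2-}^λ G(x) = (1/Γ(λ)) ∫_x^{m2} (ln(γ/x))^{λ-1} G(γ)/γ dγ. -/

import Mathlib

open MeasureTheory intervalIntegral Real Set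

/-!
The substitution `γ = exp t` turns both Hadamard integrals into Riemann–Liouville integrals of
`F = G ∘ exp` over `[log m1, log m2]`, and `F` is convex (a nondecreasing convex function of a
convex function) and nondecreasing. The two Riemann–Liouville kernels add up to a weight that is
symmetric about the midpoint `(log m1 + log m2) / 2`, where `F` takes the value `G (√(m1 * m2))`;
Fejér's inequality gives the lower bound and monotonicity of `F` the upper bound
`F (log m2) = G m2`.
-/

theorem ConvexOn.map_add_div_two_le {s : Set ℝ} {F : ℝ → ℝ} (hF : ConvexOn ℝ s F) {x y : ℝ}
    (hx : x ∈ s) (hy : y ∈ s) : F ((x + y) / 2) ≤ (F x + F y) / 2 := by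
  have h := hF.2 hx hy (by norm_num : (0 : ℝ) ≤ 1 / 2) (by norm_num : (0 : ℝ) ≤ 1 / 2)
    (by norm_num)
  rw [smul_eq_mul, smul_eq_mul, smul_eq_mul, smul_eq_mul, ← mul_add, ← mul_add,
    one_div_mul_eq_div, one_div_mul_eq_div] at h
  exact h

theorem intervalIntegral.integral_comp_add_sub (a b : ℝ) (f : ℝ → ℝ) :
    ∫ t in a..b, f (a + b - t) = ∫ t in a..b, f t := by
  simp [integral_comp_sub_left]

section WeightedIntegral

variable {a b : ℝ} {w F : ℝ → ℝ}

theorem IntervalIntegrable.mul_monotoneOn (hab : a ≤ b) (hw : IntervalIntegrable w volume a b)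
    (hF : MonotoneOn F (Icc a b)) : IntervalIntegrable (fun t => w t * F t) volume a b := by
  have hFi : IntervalIntegrable F volume a b := (uIcc_of_le hab ▸ hF).intervalIntegrable
  rw [intervalIntegrable_iff_integrableOn_Ioc_of_le hab] at hw ⊢
  refine hw.mul_bdd (c := |F a| + |F b|) hFi.aestronglyMeasurable ?_
  refine (ae_restrict_iff' measurableSet_Ioc).2 (Filter.Eventually.of_forall fun t ht => ?_)
  have ht' : t ∈ Icc a b := Ioc_subset_Icc_self ht
  have hlo := hF (left_mem_Icc.2 hab) ht' ht'.1
  have hhi := hF ht' (right_mem_Icc.2 hab) ht'.2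
  rw [Real.norm_eq_abs, abs_le]
  constructor <;> linarith [neg_abs_le (F a), le_abs_self (F b), abs_nonneg (F a), abs_nonneg (F b)]

/-- The lower half of Fejér's inequality. -/
theorem ConvexOn.map_add_div_two_mul_integral_le (hab : a ≤ b) (hF : ConvexOn ℝ (Icc a b) F)
    (hw0 : ∀ t ∈ Icc a b, 0 ≤ w t) (hsymm : ∀ t ∈ Icc a b, w (a + b - t) = w t)
    (hw : IntervalIntegrable w volume a b)
    (hwF : IntervalIntegrable (fun t => w t * F t) volume a b) :
    F ((a + b) / 2) * ∫ t in a..b, w t ≤ ∫ t in a..b, w t * F t := by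
  have hrefl : IntervalIntegrable (fun t => w (a + b - t) * F (a + b - t)) volume a b := by
    simpa using (hwF.comp_sub_left (a + b)).symm
  have hmid : ∀ t ∈ Icc a b,
      w t * F ((a + b) / 2) ≤ (w t * F t + w (a + b - t) * F (a + b - t)) / 2 := by
    intro t ht
    have hts : a + b - t ∈ Icc a b := ⟨by linarith [ht.2], by linarith [ht.1]⟩
    have h := mul_le_mul_of_nonneg_left (hF.map_add_div_two_le ht hts) (hw0 t ht)
    rw [add_sub_cancel] at h
    rw [hsymm t ht]
    linarith
  calc F ((a + b) / 2) * ∫ t in a..b, w t = ∫ t in a..b, w t * F ((a + b) / 2) := by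
        rw [intervalIntegral.integral_mul_const, mul_comm]
    _ ≤ ∫ t in a..b, (w t * F t + w (a + b - t) * F (a + b - t)) / 2 :=
        integral_mono_on hab (hw.mul_const _) ((hwF.add hrefl).div_const 2) hmid
    _ = ∫ t in a..b, w t * F t := by
        rw [intervalIntegral.integral_div, integral_add hwF hrefl,
          integral_comp_add_sub a b (fun t => w t * F t)]
        ring

theorem MonotoneOn.integral_mul_le (hab : a ≤ b) (hF : MonotoneOn F (Icc a b))
    (hw0 : ∀ t ∈ Icc a b, 0 ≤ w t) (hw : IntervalIntegrable w volume a b) :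
    ∫ t in a..b, w t * F t ≤ F b * ∫ t in a..b, w t := by
  rw [mul_comm, ← intervalIntegral.integral_mul_const]
  exact integral_mono_on hab (hw.mul_monotoneOn hab hF) (hw.mul_const _) fun t ht =>
    mul_le_mul_of_nonneg_left (hF ht (right_mem_Icc.2 hab) ht.2) (hw0 t ht)

end WeightedIntegral

section RiemannLiouville

variable {a b l : ℝ}

theorem intervalIntegrable_sub_rpow (hl : 0 < l) :
    IntervalIntegrable (fun t => (b - t) ^ (l - 1)) volume a b := by
  simpa using (intervalIntegrable_rpow' (a := b - a) (b := 0) (by linarith)).comp_sub_left b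

theorem intervalIntegrable_rpow_sub (hl : 0 < l) :
    IntervalIntegrable (fun t => (t - a) ^ (l - 1)) volume a b := by
  simpa using (intervalIntegrable_rpow' (a := 0) (b := b - a) (by linarith)).comp_sub_right a

theorem integral_sub_rpow (hl : 0 < l) :
    ∫ t in a..b, (b - t) ^ (l - 1) = (b - a) ^ l / l := by
  rw [integral_comp_sub_left (fun x => x ^ (l - 1)) b, sub_self,
    integral_rpow (Or.inl (by linarith)), sub_add_cancel, zero_rpow hl.ne', sub_zero]

theorem integral_rpow_sub (hl : 0 < l) :
    ∫ t in a..b, (t - a) ^ (l - 1) = (b - a) ^ l / l := by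
  rw [integral_comp_sub_right (fun x => x ^ (l - 1)) a, sub_self,
    integral_rpow (Or.inl (by linarith)), sub_add_cancel, zero_rpow hl.ne', sub_zero]

theorem riemannLiouville_hermite_hadamard {F : ℝ → ℝ} (hab : a < b) (hl : 0 < l)
    (hconv : ConvexOn ℝ (Icc a b) F) (hmono : MonotoneOn F (Icc a b)) :
    F ((a + b) / 2) ≤ l / (2 * (b - a) ^ l) *
        ((∫ t in a..b, (b - t) ^ (l - 1) * F t) + ∫ t in a..b, (t - a) ^ (l - 1) * F t) ∧
      l / (2 * (b - a) ^ l) *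
        ((∫ t in a..b, (b - t) ^ (l - 1) * F t) + ∫ t in a..b, (t - a) ^ (l - 1) * F t) ≤ F b := by
  set w : ℝ → ℝ := fun t => (b - t) ^ (l - 1) + (t - a) ^ (l - 1) with hw_def
  have hw : IntervalIntegrable w volume a b :=
    (intervalIntegrable_sub_rpow hl).add (intervalIntegrable_rpow_sub hl)
  have hw0 : ∀ t ∈ Icc a b, 0 ≤ w t := fun t ht =>
    add_nonneg (rpow_nonneg (by linarith [ht.2]) _) (rpow_nonneg (by linarith [ht.1]) _)
  have hsymm : ∀ t ∈ Icc a b, w (a + b - t) = w t := fun t _ => by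
    simp only [hw_def]
    rw [show b - (a + b - t) = t - a by ring, show a + b - t - a = b - t by ring, add_comm]
  have hwint : ∫ t in a..b, w t = 2 * (b - a) ^ l / l := by
    rw [integral_add (intervalIntegrable_sub_rpow hl) (intervalIntegrable_rpow_sub hl),
      integral_sub_rpow hl, integral_rpow_sub hl]
    ring
  have hsplit : ∫ t in a..b, w t * F t =
      (∫ t in a..b, (b - t) ^ (l - 1) * F t) + ∫ t in a..b, (t - a) ^ (l - 1) * F t := by
    simp only [hw_def, add_mul]
    exact integral_add ((intervalIntegrable_sub_rpow hl).mul_monotoneOn hab.le hmono)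
      ((intervalIntegrable_rpow_sub hl).mul_monotoneOn hab.le hmono)
  have hlower := hconv.map_add_div_two_mul_integral_le hab.le hw0 hsymm hw
    (hw.mul_monotoneOn hab.le hmono)
  have hupper := hmono.integral_mul_le hab.le hw0 hw
  rw [hwint, hsplit] at hlower hupper
  have hpos : 0 < 2 * (b - a) ^ l / l :=
    div_pos (mul_pos two_pos (rpow_pos_of_pos (sub_pos.2 hab) l)) hl
  rw [← inv_div (2 * (b - a) ^ l) l, inv_mul_eq_div]
  exact ⟨(le_div_iff₀ hpos).2 hlower, (div_le_iff₀ hpos).2 hupper⟩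

end RiemannLiouville

section HadamardKernel

variable {m1 m2 : ℝ}

theorem integral_div_self_eq_integral_comp_exp (hm1 : 0 < m1) (hm2 : 0 < m2) (f : ℝ → ℝ) :
    ∫ γ in m1..m2, f γ / γ = ∫ t in log m1..log m2, f (exp t) := by
  have h := integral_comp_mul_deriv_of_deriv_nonneg (g := fun γ => f γ / γ)
    continuous_exp.continuousOn (fun t _ => hasDerivAt_exp t) (fun t _ => (exp_pos t).le)
    (a := log m1) (b := log m2)
  rw [exp_log hm1, exp_log hm2] at h
  rw [← h]
  exact integral_congr fun t _ => div_mul_cancel₀ (f (exp t)) (exp_pos t).ne'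

theorem integral_log_div_left_rpow_mul_div_self (hm1 : 0 < m1) (hm2 : 0 < m2) (l : ℝ)
    (G : ℝ → ℝ) :
    ∫ γ in m1..m2, log (m2 / γ) ^ (l - 1) * (G γ / γ) =
      ∫ t in log m1..log m2, (log m2 - t) ^ (l - 1) * G (exp t) := by
  simp_rw [← mul_div_assoc]
  rw [integral_div_self_eq_integral_comp_exp hm1 hm2]
  refine integral_congr fun t _ => ?_
  rw [log_div hm2.ne' (exp_pos t).ne', log_exp]

theorem integral_log_div_right_rpow_mul_div_self (hm1 : 0 < m1) (hm2 : 0 < m2) (l : ℝ)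
    (G : ℝ → ℝ) :
    ∫ γ in m1..m2, log (γ / m1) ^ (l - 1) * (G γ / γ) =
      ∫ t in log m1..log m2, (t - log m1) ^ (l - 1) * G (exp t) := by
  simp_rw [← mul_div_assoc]
  rw [integral_div_self_eq_integral_comp_exp hm1 hm2]
  refine integral_congr fun t _ => ?_
  rw [log_div (exp_pos t).ne' hm1.ne', log_exp]

end HadamardKernel

theorem hadamard_fractional_hh_general (m1 m2 : ℝ) (G : ℝ → ℝ) (hm1 : 0 < m1) (hlt : m1 < m2)
    (hmono : MonotoneOn G (Set.Icc m1 m2))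
    (hconv : ConvexOn ℝ (Set.Icc m1 m2) G)
    (l : ℝ) (hl : 0 < l) :
    G (Real.sqrt (m1 * m2)) ≤
        (Real.Gamma (l + 1) / (2 * (Real.log m2 - Real.log m1) ^ l)) *
        ((1 / Real.Gamma l) * (∫ γ in m1..m2, (Real.log (m2 / γ)) ^ (l - 1) * (G γ / γ)) +
         (1 / Real.Gamma l) * (∫ γ in m1..m2, (Real.log (γ / m1)) ^ (l - 1) * (G γ / γ))) ∧
      (Real.Gamma (l + 1) / (2 * (Real.log m2 - Real.log m1) ^ l)) *
        ((1 / Real.Gamma l) * (∫ γ in m1..m2, (Real.log (m2 / γ)) ^ (l - 1) * (G γ / γ)) +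
         (1 / Real.Gamma l) * (∫ γ in m1..m2, (Real.log (γ / m1)) ^ (l - 1) * (G γ / γ))) ≤
      G m2 := by
  have hm2 : 0 < m2 := hm1.trans hlt
  have himage : exp '' Icc (log m1) (log m2) = Icc m1 m2 := by
    rw [image_exp_Icc, exp_log hm1, exp_log hm2]
  have hmono_exp : MonotoneOn (G ∘ exp) (Icc (log m1) (log m2)) :=
    hmono.comp (exp_monotone.monotoneOn _) (himage ▸ mapsTo_image exp _)
  have hconv_exp : ConvexOn ℝ (Icc (log m1) (log m2)) (G ∘ exp) :=
    (himage ▸ hconv).comp (convexOn_exp.subset (subset_univ _) (convex_Icc _ _)) (himage ▸ hmono)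
  have hmid : exp ((log m1 + log m2) / 2) = √(m1 * m2) := by
    rw [exp_half, exp_add, exp_log hm1, exp_log hm2]
  have hGamma : Gamma (l + 1) * (1 / Gamma l) = l := by
    rw [Gamma_add_one hl.ne', mul_one_div, mul_div_assoc, div_self (Gamma_pos_of_pos hl).ne',
      mul_one]
  obtain ⟨hlower, hupper⟩ :=
    riemannLiouville_hermite_hadamard (log_lt_log hm1 hlt) hl hconv_exp hmono_exp
  simp only [Function.comp_apply, hmid, exp_log hm2] at hlower hupper
  rw [integral_log_div_left_rpow_mul_div_self hm1 hm2,
    integral_log_div_right_rpow_mul_div_self hm1 hm2, ← mul_add, ← mul_assoc, div_mul_eq_mul_div,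
    hGamma]
  exact ⟨hlower, hupper⟩

theorem hadamard_fractional_hh (m1 m2 : ℝ) (G : ℝ → ℝ) (hm1 : 0 < m1) (hlt : m1 < m2)
    (hnonneg : ∀ x ∈ Set.Icc m1 m2, 0 ≤ G x)
    (hmono : MonotoneOn G (Set.Icc m1 m2))
    (hconv : ConvexOn ℝ (Set.Icc m1 m2) G)
    (hint : IntervalIntegrable G volume m1 m2)
    (l : ℝ) (hl : 0 < l) :
    G (Real.sqrt (m1 * m2)) ≤
        (Real.Gamma (l + 1) / (2 * (Real.log m2 - Real.log m1) ^ l)) *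
        ((1 / Real.Gamma l) * (∫ γ in m1..m2, (Real.log (m2 / γ)) ^ (l - 1) * (G γ / γ)) +
         (1 / Real.Gamma l) * (∫ γ in m1..m2, (Real.log (γ / m1)) ^ (l - 1) * (G γ / γ))) ∧
      (Real.Gamma (l + 1) / (2 * (Real.log m2 - Real.log m1) ^ l)) *
        ((1 / Real.Gamma l) * (∫ γ in m1..m2, (Real.log (m2 / γ)) ^ (l - 1) * (G γ / γ)) +
         (1 / Real.Gamma l) * (∫ γ in m1..m2, (Real.log (γ / m1)) ^ (l - 1) * (G γ / γ))) ≤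
      G m2 :=
  hadamard_fractional_hh_general m1 m2 G hm1 hlt hmono hconv l hl
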